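/- arXiv:2605.25684 — 2 statements merged into one kernel-verified Lean document; each statement's English description precedes it below -/
import Mathlib

section
/- Let A and B be lower triangular infinite complex matrices and suppose there is a lower triangular matrix C with CA = B such that the pair (A,B) satisfies property (*3C). Then for every locally convex Hausdorff topological vector space E over ℂ, every A-bounded sequence 𝒯 of continuous linear operators on E is B-null. -/
open Filter Finset Topology ZeroAtInfty
open scoped ENNReal ComplexOrder

noncomputable section

/-- An infinite matrix of complex numbers, with rows and columns indexed by `ℕ`. -/
abbrev Mat : Type := ℕ → ℕ → ℂ

/-- `A` is lower triangular: `A n k = 0` whenever `k > n`. -/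
def Mat.LowerTri (A : Mat) : Prop := ∀ n k : ℕ, n < k → A n k = 0

/-- The product of two (lower triangular) infinite matrices; for lower triangular
matrices all the sums involved are finite. -/
def Mat.mul (C A : Mat) : Mat := fun n k => ∑ j ∈ Finset.range (n + 1), C n j * A j k

/-- The identity matrix. -/
def Mat.one : Mat := fun n k => if n = k then 1 else 0

/-- The matrix `Δ`, with `Δ n n = 1`, `Δ n (n-1) = -1` (for `n ≥ 1`) and `0` elsewhere. -/
def Mat.delta : Mat := fun n i => (if n = i then 1 else 0) - (if n = i + 1 then 1 else 0)

/-- The `n`-th absolute row sum `∑_{i=0}^{n} |c_{ni}|` of a lower triangular matrix. -/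
def Mat.rowSum (C : Mat) (n : ℕ) : ℝ := ∑ i ∈ Finset.range (n + 1), ‖C n i‖

/-- Property (*C): the absolute row sums of `C` are (uniformly) bounded. -/
def Mat.StarC (C : Mat) : Prop := ∃ K : ℝ, ∀ n : ℕ, C.rowSum n ≤ K

/-- Property (*2C): (*C) together with: every column of `C` tends to `0`. -/
def Mat.Star2C (C : Mat) : Prop :=
  C.StarC ∧ ∀ i : ℕ, Tendsto (fun n => C n i) atTop (𝓝 (0 : ℂ))

/-- Property (*3C): the absolute row sums of `C` tend to `0`. -/
def Mat.Star3C (C : Mat) : Prop := Tendsto (fun n => C.rowSum n) atTop (𝓝 (0 : ℝ))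

/-- The pair `(A, B)` satisfies (*C): there is a lower triangular `C` with `CA = B`
whose absolute row sums are bounded. -/
def PairStarC (A B : Mat) : Prop := ∃ C : Mat, C.LowerTri ∧ Mat.mul C A = B ∧ C.StarC

/-- The pair `(A, B)` satisfies (*2C). -/
def PairStar2C (A B : Mat) : Prop := ∃ C : Mat, C.LowerTri ∧ Mat.mul C A = B ∧ C.Star2C

/-- The pair `(A, B)` satisfies (*3C). -/
def PairStar3C (A B : Mat) : Prop := ∃ C : Mat, C.LowerTri ∧ Mat.mul C A = B ∧ C.Star3C

/-- A probability matrix: lower triangular, nonnegative (real) entries, rows summing to `1`. -/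
def Mat.IsProb (A : Mat) : Prop :=
  A.LowerTri ∧ (∀ n k : ℕ, 0 ≤ A n k) ∧ ∀ n : ℕ, (∑ i ∈ Finset.range (n + 1), A n i) = 1

/-- The action of a lower triangular matrix on a sequence: `(Cx)_n = ∑_{i=0}^n c_{ni} x_i`. -/
def Mat.apply (C : Mat) (x : ℕ → ℂ) (n : ℕ) : ℂ := ∑ i ∈ Finset.range (n + 1), C n i * x i

section Ops

variable {E : Type*} [AddCommGroup E] [Module ℂ E] [UniformSpace E]
  [IsUniformAddGroup E] [ContinuousSMul ℂ E]

/-- `(A𝒯)_n = ∑_{i=0}^{n} a_{ni} T_i` for a sequence `𝒯` of continuous linear operators. -/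
def matOp (A : Mat) (T : ℕ → E →L[ℂ] E) (n : ℕ) : E →L[ℂ] E :=
  ∑ i ∈ Finset.range (n + 1), A n i • T i

/-- The sequence `𝒯` is `A`-bounded: `{(A𝒯)_n : n ∈ ℕ}` is equicontinuous. -/
def MatBounded (A : Mat) (T : ℕ → E →L[ℂ] E) : Prop :=
  Equicontinuous fun n => ⇑(matOp A T n)

/-- The sequence `𝒯` is `A`-null: `(A𝒯)_n x → 0` for every `x`. -/
def MatNull (A : Mat) (T : ℕ → E →L[ℂ] E) : Prop :=
  ∀ x : E, Tendsto (fun n => matOp A T n x) atTop (𝓝 (0 : E))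

/-- The sequence `𝒯` is `A`-ergodic: `(A𝒯)_n` converges pointwise to a continuous
linear operator `P`. -/
def MatErgodic (A : Mat) (T : ℕ → E →L[ℂ] E) : Prop :=
  ∃ P : E →L[ℂ] E, ∀ x : E, Tendsto (fun n => matOp A T n x) atTop (𝓝 (P x))

/-- `(AT)_n = ∑_{i=0}^{n} a_{ni} T^i` for a single operator `T`. -/
def matOpPow (A : Mat) (T : E →L[ℂ] E) (n : ℕ) : E →L[ℂ] E :=
  matOp A (fun i => T ^ i) n

/-- A single operator `T` is `A`-bounded if the sequence of its powers is. -/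
def OpBounded (A : Mat) (T : E →L[ℂ] E) : Prop := MatBounded A fun i => T ^ i

/-- A single operator `T` is `A`-null if the sequence of its powers is. -/
def OpNull (A : Mat) (T : E →L[ℂ] E) : Prop := MatNull A fun i => T ^ i

/-- A single operator `T` is `A`-ergodic if the sequence of its powers is. -/
def OpErgodic (A : Mat) (T : E →L[ℂ] E) : Prop := MatErgodic A fun i => T ^ i

end Ops

/-- `S(n, p) = ∑_{i=1}^{n} i^p`. -/
def Sp (p : ℝ) (n : ℕ) : ℝ := ∑ i ∈ Finset.range n, ((i : ℝ) + 1) ^ p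

/-- The probability matrix `M_p`, reindexed so that rows and columns start at `0`
(entry `(n, i)` here corresponds to entry `(n+1, i+1)` in the paper). -/
def Mp (p : ℝ) : Mat := fun n i =>
  if i ≤ n then ((((i : ℝ) + 1) ^ p / Sp p (n + 1) : ℝ) : ℂ) else 0

/-- The (lower triangular) inverse of `M_p`. -/
def MpInv (p : ℝ) : Mat := fun n i =>
  if i = n then ((Sp p (n + 1) / ((n : ℝ) + 1) ^ p : ℝ) : ℂ)
  else if i + 1 = n then ((-(Sp p n) / ((n : ℝ) + 1) ^ p : ℝ) : ℂ)
  else 0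

/-- The Banach space `ℓ∞` of bounded complex sequences with the sup norm. -/
abbrev ellInf : Type := ↥(lp (fun _ : ℕ => ℂ) ∞)

/-- The Banach space `c₀` of complex sequences tending to `0`, with the sup norm. -/
abbrev czero : Type := C₀(ℕ, ℂ)

open Pointwise

lemma combo_mem {E : Type} [AddCommGroup E] [Module ℂ E] (W : Set E)
    (hbal : Balanced ℂ W) (hconv : Convex ℝ W) (h0 : (0:E) ∈ W)
    (s : Finset ℕ) (c : ℕ → ℂ) (w : ℕ → E) (hw : ∀ j ∈ s, w j ∈ W)
    (hc : ∑ j ∈ s, ‖c j‖ ≤ 1) : ∑ j ∈ s, c j • w j ∈ W := by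
  have key : ∀ (s : Finset ℕ), (∀ j ∈ s, w j ∈ W) →
      ∑ j ∈ s, c j • w j ∈ (∑ j ∈ s, ‖c j‖) • W := by
    intro s
    induction s using Finset.induction_on with
    | empty => intro _; exact ⟨0, h0, by simp⟩
    | @insert a s ha ih =>
      intro hw
      rw [Finset.sum_insert ha, Finset.sum_insert ha,
        hconv.add_smul (norm_nonneg _) (Finset.sum_nonneg fun j _ => norm_nonneg _)]
      refine Set.add_mem_add ?_ (ih fun j hj => hw j (Finset.mem_insert_of_mem hj))
      by_cases hca : c a = 0
      · exact ⟨0, h0, by simp [hca]⟩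
      · refine ⟨(‖c a‖⁻¹ * c a : ℂ) • w a, ?_, ?_⟩
        · apply hbal.smul_mem ?_ (hw a (Finset.mem_insert_self a s))
          rw [norm_mul, Complex.norm_real, Real.norm_eq_abs, abs_inv, abs_norm,
            inv_mul_cancel₀ (norm_ne_zero_iff.2 hca)]
        · show ‖c a‖ • _ = _
          rw [← Complex.coe_smul, smul_smul, ← mul_assoc, ← Complex.ofReal_mul,
            mul_inv_cancel₀ (norm_ne_zero_iff.2 hca)]
          norm_num
  obtain ⟨y, hy, hyeq⟩ := key s hw
  have hyeq' : (∑ j ∈ s, ‖c j‖) • y = ∑ j ∈ s, c j • w j := hyeq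
  rw [← hyeq', ← Complex.coe_smul]
  apply hbal.smul_mem ?_ hy
  rw [Complex.norm_real, Real.norm_eq_abs,
    abs_of_nonneg (Finset.sum_nonneg fun j _ => norm_nonneg _)]
  exact hc

lemma matOp_mul {E : Type} [AddCommGroup E] [Module ℂ E] [UniformSpace E]
    [IsUniformAddGroup E] [ContinuousSMul ℂ E]
    (C A : Mat) (hA : A.LowerTri) (T : ℕ → E →L[ℂ] E) (n : ℕ) :
    matOp (Mat.mul C A) T n = ∑ j ∈ Finset.range (n+1), C n j • matOp A T j := by
  unfold matOp Mat.mul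
  simp_rw [Finset.sum_smul, Finset.smul_sum]
  rw [Finset.sum_comm]
  refine Finset.sum_congr rfl fun j hj => ?_
  rw [Finset.mem_range] at hj
  have hsub : Finset.range (j+1) ⊆ Finset.range (n+1) :=
    Finset.range_subset_range.2 (by omega)
  rw [← Finset.sum_subset hsub (fun i hi hni => ?_)]
  · refine Finset.sum_congr rfl fun i _ => ?_
    rw [smul_smul]
  · rw [Finset.mem_range] at hi hni
    rw [hA j i (by omega), mul_zero, zero_smul]


/-- If `(A, B)` satisfies (*3C), then every `A`-bounded sequence of continuous linear
operators on a locally convex Hausdorff space is `B`-null. -/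
theorem statement2 (A B C : Mat) (hA : A.LowerTri) (hB : B.LowerTri) (hC : C.LowerTri)
    (hCA : Mat.mul C A = B) (hStar : C.Star3C) :
    ∀ (E : Type) [AddCommGroup E] [Module ℂ E] [UniformSpace E] [IsUniformAddGroup E]
      [ContinuousSMul ℂ E] [LocallyConvexSpace ℝ E] [T2Space E],
      ∀ T : ℕ → E →L[ℂ] E, MatBounded A T → MatNull B T := by
  intro E _ _ _ _ _ _ _ T hBdd x
  have hbasis : (𝓝 (0:E)).HasBasis
      (fun s : Set E => s ∈ 𝓝 (0:E) ∧ Balanced ℂ s ∧ Convex ℝ s) id := by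
    refine (LocallyConvexSpace.convex_basis_zero ℝ E).to_hasBasis (fun s hs => ?_)
      fun s hs => ⟨s, ⟨hs.1, hs.2.2⟩, rfl.subset⟩
    refine ⟨convexHull ℝ (balancedCore ℂ s), ?_, convexHull_min (balancedCore_subset s) hs.2⟩
    refine ⟨Filter.mem_of_superset (balancedCore_mem_nhds_zero hs.1) (subset_convexHull ℝ _),
      ?_, convex_convexHull ℝ _⟩
    intro a ha
    rintro _ ⟨y, hy, rfl⟩
    have h := LinearMap.image_convexHull
      ((a • LinearMap.id : E →ₗ[ℂ] E).restrictScalars ℝ) (balancedCore ℂ s)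
    have hy' : a • y ∈ ((a • LinearMap.id : E →ₗ[ℂ] E).restrictScalars ℝ) ''
        convexHull ℝ (balancedCore ℂ s) := ⟨y, hy, by simp⟩
    rw [h] at hy'
    refine convexHull_mono ?_ hy'
    rintro _ ⟨z, hz, rfl⟩
    simpa using balancedCore_balanced s a ha ⟨z, hz, rfl⟩
  rw [hbasis.tendsto_right_iff]
  rintro W ⟨hWnhds, hWbal, hWconv⟩
  -- equicontinuity at 0 : find U ∈ 𝓝 0 with matOp A T i u ∈ W for all i, u ∈ U
  have hV : {p : E × E | p.2 - p.1 ∈ W} ∈ uniformity E := by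
    rw [uniformity_eq_comap_nhds_zero]
    exact Filter.preimage_mem_comap hWnhds
  have hU : ∀ᶠ u in 𝓝 (0 : E), ∀ i, matOp A T i u ∈ W := by
    filter_upwards [hBdd 0 _ hV] with u hu i
    simpa using hu i
  -- absorb x
  have habs : Absorbent ℂ {u | ∀ i, matOp A T i u ∈ W} := absorbent_nhds_zero hU
  obtain ⟨c, hc1, hcx⟩ : ∃ c : ℂ, 1 ≤ ‖c‖ ∧ x ∈ c • {u | ∀ i, matOp A T i u ∈ W} := by
    have h1 : ∀ᶠ c : ℂ in Bornology.cobounded ℂ, 1 ≤ ‖c‖ := by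
      simpa using eventually_cobounded_le_norm (1 : ℝ)
    have h2 : ∀ᶠ c : ℂ in Bornology.cobounded ℂ, x ∈ c • {u | ∀ i, matOp A T i u ∈ W} :=
      by
        have h2' : ∀ᶠ c : ℂ in Bornology.cobounded ℂ,
            {x} ⊆ c • {u | ∀ i, matOp A T i u ∈ W} := habs x
        exact h2'.mono fun c hc => Set.singleton_subset_iff.1 hc
    exact (h1.and h2).exists
  obtain ⟨u, hu, rfl⟩ := hcx
  have hc0 : c ≠ 0 := fun h => by simp [h] at hc1; linarith
  -- eventually the row sums are small
  have hsmall : ∀ᶠ n in atTop, ‖c‖ * C.rowSum n ≤ 1 := by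
    have : Tendsto (fun n => ‖c‖ * C.rowSum n) atTop (𝓝 (‖c‖ * 0)) :=
      hStar.const_mul _
    rw [mul_zero] at this
    filter_upwards [this.eventually (eventually_le_nhds (by norm_num : (0:ℝ) < 1))]
      with n hn using hn
  filter_upwards [hsmall] with n hn
  show matOp B T n (c • u) ∈ W
  rw [← hCA, matOp_mul C A hA]
  have heq : (∑ j ∈ Finset.range (n+1), C n j • matOp A T j) (c • u)
      = ∑ j ∈ Finset.range (n+1), (C n j * c) • matOp A T j u := by
    rw [ContinuousLinearMap.sum_apply]
    refine Finset.sum_congr rfl fun j _ => ?_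
    rw [ContinuousLinearMap.smul_apply, (matOp A T j).map_smul, smul_smul]
  rw [heq]
  refine combo_mem W hWbal hWconv (mem_of_mem_nhds hWnhds) _ _ _
    (fun j _ => hu j) ?_
  calc ∑ j ∈ Finset.range (n+1), ‖C n j * c‖
      = ‖c‖ * C.rowSum n := by
        simp_rw [norm_mul, Mat.rowSum, ← Finset.sum_mul]; ring
    _ ≤ 1 := hn
end
end

section
/- Let E be a barrelled locally convex Hausdorff topological vector space over ℂ, A a probability matrix with lim_{n→∞} a_{n0} = 0, and T a continuous linear operator on E. Consider: (i) T is A-bounded and AΔ-null, and for every x ∈ E the set {(AT)_n x : n ∈ ℕ} is relatively compact in the weak topology σ(E,E'); (ii) T is A-ergodic; (iii) T is A-bounded and ΔA-null. Then (i) implies (ii), and (ii) implies (iii). Moreover, if the pair (ΔA, AΔ) satisfies (*2C), then (i) and (ii) are equivalent. -/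
open Filter Finset Topology ZeroAtInfty
open scoped ENNReal ComplexOrder

noncomputable section

section AuxLemmas

variable {E : Type*} [AddCommGroup E] [Module ℂ E] [UniformSpace E]
  [IsUniformAddGroup E] [ContinuousSMul ℂ E]

lemma matOpPow_apply (A : Mat) (T : E →L[ℂ] E) (n : ℕ) (x : E) :
    matOpPow A T n x = ∑ i ∈ Finset.range (n + 1), A n i • (T ^ i) x := by
  simp [matOpPow, matOp, ContinuousLinearMap.sum_apply]

lemma lowerTri_mul {C B : Mat} (hC : C.LowerTri) (hB : B.LowerTri) :
    (Mat.mul C B).LowerTri := by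
  intro n k hnk
  apply Finset.sum_eq_zero
  intro j hj
  rw [hB j k (lt_of_le_of_lt (Nat.lt_succ_iff.mp (Finset.mem_range.mp hj)) hnk), mul_zero]

lemma delta_lowerTri : Mat.delta.LowerTri := by
  intro n k hnk
  unfold Mat.delta
  rw [if_neg (by omega), if_neg (by omega), sub_zero]

lemma mul_delta_entry (A : Mat) (hA : A.LowerTri) (n k : ℕ) :
    Mat.mul A Mat.delta n k = A n k - A n (k + 1) := by
  unfold Mat.mul Mat.delta
  simp_rw [mul_sub, Finset.sum_sub_distrib, mul_ite, mul_one, mul_zero]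
  rw [Finset.sum_ite_eq' (Finset.range (n + 1)) k (fun j => A n j),
    Finset.sum_ite_eq' (Finset.range (n + 1)) (k + 1) (fun j => A n j)]
  rcases le_or_gt k n with hk | hk
  · rw [if_pos (Finset.mem_range.mpr (by omega))]
    rcases le_or_gt (k + 1) n with hk1 | hk1
    · rw [if_pos (Finset.mem_range.mpr (by omega))]
    · rw [if_neg (fun h => by exact absurd (Finset.mem_range.mp h) (by omega)),
        hA n (k + 1) (by omega)]
  · rw [if_neg (fun h => by exact absurd (Finset.mem_range.mp h) (by omega)),
      if_neg (fun h => by exact absurd (Finset.mem_range.mp h) (by omega)),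
      hA n k (by omega), hA n (k + 1) (by omega)]

lemma delta_mul_entry (A : Mat) (n k : ℕ) :
    Mat.mul Mat.delta A (n + 1) k = A (n + 1) k - A n k := by
  unfold Mat.mul Mat.delta
  simp_rw [sub_mul, Finset.sum_sub_distrib, ite_mul, one_mul, zero_mul]
  have h1 : ∀ j, (if n + 1 = j then A j k else 0) = if j = n + 1 then A j k else 0 := by
    intro j; simp [eq_comm]
  have h2 : ∀ j, (if n + 1 = j + 1 then A j k else 0) = if j = n then A j k else 0 := by
    intro j
    by_cases h : j = n
    · simp [h]
    · rw [if_neg (by omega), if_neg h]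
  simp_rw [h1, h2]
  rw [Finset.sum_ite_eq' (Finset.range (n + 2)) (n + 1) (fun j => A j k),
    Finset.sum_ite_eq' (Finset.range (n + 2)) n (fun j => A j k)]
  rw [if_pos (Finset.mem_range.mpr (by omega)), if_pos (Finset.mem_range.mpr (by omega))]

end AuxLemmas
section AuxLemmas2

variable {E : Type*} [AddCommGroup E] [Module ℂ E] [UniformSpace E]
  [IsUniformAddGroup E] [ContinuousSMul ℂ E]

lemma sum_shift (A : Mat) (hA : A.LowerTri) (T : E →L[ℂ] E) (n : ℕ) (x : E) :
    ∑ k ∈ Finset.range (n + 1), A n k • (T ^ k) x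
      = A n 0 • x + ∑ k ∈ Finset.range (n + 1), A n (k + 1) • (T ^ (k + 1)) x := by
  have h2 : ∑ k ∈ Finset.range (n + 2), A n k • (T ^ k) x
      = (∑ k ∈ Finset.range (n + 1), A n (k + 1) • (T ^ (k + 1)) x) + A n 0 • (T ^ 0) x :=
    Finset.sum_range_succ' (fun k => A n k • (T ^ k) x) (n + 1)
  rw [Finset.sum_range_succ, hA n (n + 1) (Nat.lt_succ_self n), zero_smul, add_zero] at h2
  rw [h2, pow_zero, ContinuousLinearMap.one_apply, add_comm]

lemma matOpPow_mul_delta_apply (A : Mat) (hA : A.LowerTri) (T : E →L[ℂ] E) (n : ℕ) (x : E) :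
    matOpPow A T n x - matOpPow A T n (T x)
      = A n 0 • (x - T x) + T (A n 0 • x - matOpPow (Mat.mul A Mat.delta) T n x) := by
  rw [matOpPow_apply, matOpPow_apply, matOpPow_apply, map_sub, map_smul, map_sum]
  have e1 : ∀ k, (T ^ k) (T x) = (T ^ (k + 1)) x := by
    intro k
    rw [pow_succ, ContinuousLinearMap.mul_apply]
  have e2 : ∀ k, T (Mat.mul A Mat.delta n k • (T ^ k) x)
      = (A n k - A n (k + 1)) • (T ^ (k + 1)) x := by
    intro k
    rw [map_smul, mul_delta_entry A hA, pow_succ', ContinuousLinearMap.mul_apply]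
  simp_rw [e1, e2, sub_smul, smul_sub]
  rw [Finset.sum_sub_distrib]
  have := sum_shift A hA T n x
  rw [this]
  abel

lemma matOpPow_delta_mul_apply (A : Mat) (hA : A.LowerTri) (T : E →L[ℂ] E) (n : ℕ) (x : E) :
    matOpPow (Mat.mul Mat.delta A) T (n + 1) x
      = matOpPow A T (n + 1) x - matOpPow A T n x := by
  rw [matOpPow_apply, matOpPow_apply, matOpPow_apply]
  simp_rw [delta_mul_entry, sub_smul]
  rw [Finset.sum_sub_distrib]
  congr 1
  rw [Finset.sum_range_succ, hA n (n + 1) (Nat.lt_succ_self n), zero_smul, add_zero]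

lemma matOpPow_mul_apply' {C B : Mat} (hC : C.LowerTri) (hB : B.LowerTri)
    (T : E →L[ℂ] E) (n : ℕ) (x : E) :
    matOpPow (Mat.mul C B) T n x
      = ∑ j ∈ Finset.range (n + 1), C n j • matOpPow B T j x := by
  rw [matOpPow_apply]
  unfold Mat.mul
  simp_rw [Finset.sum_smul, mul_smul]
  rw [Finset.sum_comm]
  refine Finset.sum_congr rfl fun j hj => ?_
  rw [← Finset.smul_sum, matOpPow_apply]
  congr 1
  have hjn : j + 1 ≤ n + 1 := Nat.succ_le_succ (Nat.lt_succ_iff.mp (Finset.mem_range.mp hj))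
  refine (Finset.sum_subset (Finset.range_subset_range.mpr hjn) (fun k _ hk' => ?_)).symm
  rw [hB j k (by simp only [Finset.mem_range, Nat.lt_succ_iff, not_le] at hk'; exact hk'),
    zero_smul]

lemma pow_comm_matOpPow (A : Mat) (T : E →L[ℂ] E) (n i : ℕ) (x : E) :
    (T ^ i) (matOpPow A T n x) = matOpPow A T n ((T ^ i) x) := by
  rw [matOpPow_apply, matOpPow_apply, map_sum]
  refine Finset.sum_congr rfl fun k _ => ?_
  rw [map_smul, ← ContinuousLinearMap.mul_apply, ← ContinuousLinearMap.mul_apply,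
    pow_mul_comm]

lemma matOpPow_comm (A B : Mat) (T : E →L[ℂ] E) (m n : ℕ) (x : E) :
    matOpPow A T m (matOpPow B T n x) = matOpPow B T n (matOpPow A T m x) := by
  rw [matOpPow_apply A T m (matOpPow B T n x)]
  simp_rw [pow_comm_matOpPow B T n, ← map_smul (matOpPow B T n), ← map_sum,
    ← matOpPow_apply]

end AuxLemmas2
section AuxLemmas3

variable {E : Type*} [AddCommGroup E] [Module ℂ E] [UniformSpace E]
  [IsUniformAddGroup E] [ContinuousSMul ℂ E]

lemma isClosed_tendsto_zero {S : ℕ → E →L[ℂ] E} (h : Equicontinuous fun n => ⇑(S n)) :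
    IsClosed {x : E | Tendsto (fun n => S n x) atTop (𝓝 0)} := by
  refine isClosed_of_closure_subset fun x hx => ?_
  rw [Set.mem_setOf_eq, Filter.tendsto_def]
  intro u hu
  obtain ⟨V, hV, hVu⟩ := exists_nhds_zero_half hu
  have hVn : V ∩ (fun z : E => -z) ⁻¹' V ∈ 𝓝 (0 : E) := by
    refine Filter.inter_mem hV ?_
    have : ContinuousAt (fun z : E => -z) 0 := continuous_neg.continuousAt
    exact this.preimage_mem_nhds (by rwa [neg_zero])
  have hent : {p : E × E | p.2 - p.1 ∈ V ∩ (fun z : E => -z) ⁻¹' V} ∈ uniformity E := by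
    rw [uniformity_eq_comap_nhds_zero E]
    exact Filter.preimage_mem_comap hVn
  have hnb := h x _ hent
  obtain ⟨x', hx'P, hx'D⟩ := mem_closure_iff_nhds.mp hx _ hnb
  have hx'V : ∀ᶠ n in atTop, S n x' ∈ V := hx'D.eventually_mem hV
  rw [Set.mem_setOf_eq] at hx'P
  filter_upwards [hx'V] with n hn
  have h1 : S n x' - S n x ∈ V ∩ (fun z : E => -z) ⁻¹' V := hx'P n
  have h2 : S n x - S n x' ∈ V := by
    have := h1.2
    simpa using this
  have := hVu _ h2 _ hn
  simpa using this

lemma sum_smul_mem_of_absConvex {s : Set E} (hs0 : (0 : E) ∈ s)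
    (hbal : Balanced ℂ s) (hconv : Convex ℝ s)
    (t : Finset ℕ) (c : ℕ → ℂ) (z : ℕ → E) (hz : ∀ j ∈ t, z j ∈ s)
    (hc : ∑ j ∈ t, ‖c j‖ ≤ 1) :
    ∑ j ∈ t, c j • z j ∈ s := by
  obtain ⟨a, ha⟩ := Infinite.exists_notMem_finset t
  set w : ℕ → ℝ := fun j => if j = a then 1 - ∑ j ∈ t, ‖c j‖ else ‖c j‖ with hw
  set p : ℕ → E := fun j =>
    if j = a then 0 else if hcj : c j = 0 then 0 else ((‖c j‖ : ℂ)⁻¹ * c j) • z j with hp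
  have hsum : ∑ j ∈ insert a t, w j = 1 := by
    rw [Finset.sum_insert ha, hw]
    simp only [if_pos rfl]
    rw [Finset.sum_congr rfl (fun j hj => if_neg (by rintro rfl; exact ha hj))]
    simp
  have hwpos : ∀ j ∈ insert a t, 0 ≤ w j := by
    intro j hj
    rw [hw]
    by_cases h : j = a
    · simp only [if_pos h]; linarith
    · simp only [if_neg h]; positivity
  have hpmem : ∀ j ∈ insert a t, p j ∈ s := by
    intro j hj
    rw [hp]
    by_cases h : j = a
    · simpa [h] using hs0
    · simp only [if_neg h]
      by_cases hcj : c j = 0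
    --
      · simpa [hcj] using hs0
      · rw [dif_neg hcj]
        refine hbal.smul_mem ?_ (hz j (Finset.mem_insert.mp hj |>.resolve_left h))
        rw [norm_mul, norm_inv, Complex.norm_real, Real.norm_eq_abs,
          abs_of_nonneg (norm_nonneg (c j)),
          inv_mul_cancel₀ (norm_ne_zero_iff.mpr hcj)]
  have hcomb := hconv.sum_mem hwpos hsum hpmem
  have heq : ∑ j ∈ insert a t, w j • p j = ∑ j ∈ t, c j • z j := by
    rw [Finset.sum_insert ha]
    have h1 : w a • p a = 0 := by simp [hw, hp]
    rw [h1, zero_add]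
    refine Finset.sum_congr rfl fun j hj => ?_
    have hja : j ≠ a := by rintro rfl; exact ha hj
    rw [hw, hp]
    simp only [if_neg hja]
    by_cases hcj : c j = 0
    · simp [hcj]
    · rw [dif_neg hcj, ← smul_assoc]
      congr 1
      rw [Complex.real_smul, ← mul_assoc,
        mul_inv_cancel₀ (Complex.ofReal_ne_zero.mpr (norm_ne_zero_iff.mpr hcj)), one_mul]
  rw [← heq]
  exact hcomb

end AuxLemmas3
section AuxLemmasLC

variable {E : Type*} [AddCommGroup E] [Module ℂ E] [TopologicalSpace E]
  [IsTopologicalAddGroup E]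

lemma locallyConvexSpace_complex_of_real [LocallyConvexSpace ℝ E] : LocallyConvexSpace ℂ E := by
  rw [locallyConvexSpace_iff_exists_convex_subset_zero]
  intro U hU
  obtain ⟨S, hS, hSc, hSU⟩ := (locallyConvexSpace_iff_exists_convex_subset_zero ℝ E).mp ‹_› U hU
  refine ⟨S, hS, ?_, hSU⟩
  intro x hx y hy a b ha hb hab
  obtain ⟨ha1, ha2⟩ := Complex.nonneg_iff.mp ha
  obtain ⟨hb1, hb2⟩ := Complex.nonneg_iff.mp hb
  have hae : a = (a.re : ℂ) := Complex.ext (by simp) (by simp [← ha2])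
  have hbe : b = (b.re : ℂ) := Complex.ext (by simp) (by simp [← hb2])
  have hab' : a.re + b.re = 1 := by
    have := congrArg Complex.re hab
    simpa using this
  have := hSc hx hy ha1 hb1 hab'
  rw [hae, hbe, Complex.coe_smul, Complex.coe_smul]
  exact this

end AuxLemmasLC
section AuxLemmas4
open scoped Pointwise

variable {E : Type*} [AddCommGroup E] [Module ℂ E] [UniformSpace E]
  [IsUniformAddGroup E] [ContinuousSMul ℂ E] [LocallyConvexSpace ℝ E]

lemma toeplitz_tendsto_zero {c : Mat} {K : ℝ}
    (hrow : ∀ n, (∑ i ∈ Finset.range (n + 1), ‖c n i‖) ≤ K)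
    (hcol : ∀ i, Tendsto (fun n => c n i) atTop (𝓝 (0 : ℂ)))
    (v : ℕ → E) (hv : Tendsto v atTop (𝓝 0)) :
    Tendsto (fun n => ∑ i ∈ Finset.range (n + 1), c n i • v i) atTop (𝓝 0) := by
  have : ContinuousSMul ℝ E := IsScalarTower.continuousSMul ℂ
  have : LocallyConvexSpace ℂ E := locallyConvexSpace_complex_of_real
  set K' : ℝ := max K 1 with hK'
  have hK'1 : (1 : ℝ) ≤ K' := le_max_right K 1
  have hK'0 : (0 : ℝ) < K' := lt_of_lt_of_le one_pos hK'1
  have hK'ne : (K' : ℂ) ≠ 0 := Complex.ofReal_ne_zero.mpr (ne_of_gt hK'0)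
  rw [Filter.tendsto_def]
  intro u hu
  obtain ⟨W, hW, hWu⟩ := exists_nhds_zero_half hu
  have hW' : ((K' : ℂ))⁻¹ • W ∈ 𝓝 (0 : E) :=
    (set_smul_mem_nhds_zero_iff (inv_ne_zero hK'ne)).mpr hW
  obtain ⟨s, ⟨hs_mem, hs_bal, hs_conv⟩, hs_sub⟩ :=
    (nhds_hasBasis_absConvex ℂ E).mem_iff.mp hW'
  have hs0 : (0 : E) ∈ s := mem_of_mem_nhds hs_mem
  obtain ⟨N, hN⟩ := Filter.eventually_atTop.mp (hv.eventually_mem hs_mem)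
  have head : Tendsto (fun n => ∑ i ∈ Finset.range N, c n i • v i) atTop (𝓝 0) := by
    have := tendsto_finset_sum (Finset.range N)
      (fun i (_ : i ∈ Finset.range N) => (hcol i).smul_const (v i))
    simpa using this
  have hmem : ∀ᶠ n in atTop, (∑ i ∈ Finset.range N, c n i • v i) ∈ W :=
    head.eventually_mem hW
  rw [Filter.tendsto_def] at head
  filter_upwards [hmem, Filter.eventually_ge_atTop N] with n hn1 hn2
  have hsplit : ∑ i ∈ Finset.range N, c n i • v i
      + ∑ i ∈ Finset.Ico N (n + 1), c n i • v i
      = ∑ i ∈ Finset.range (n + 1), c n i • v i :=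
    Finset.sum_range_add_sum_Ico _ (by omega)
  have htail : (∑ i ∈ Finset.Ico N (n + 1), c n i • v i) ∈ W := by
    have hcomb : (∑ i ∈ Finset.Ico N (n + 1), (c n i / (K' : ℂ)) • v i) ∈ s := by
      refine sum_smul_mem_of_absConvex hs0 hs_bal (hs_conv.lift ℝ) _ _ _
        (fun j hj => hN j (Finset.mem_Ico.mp hj).1) ?_
      have h1 : ∀ i, ‖c n i / (K' : ℂ)‖ = ‖c n i‖ / K' := by
        intro i
        rw [norm_div, Complex.norm_real, Real.norm_eq_abs, abs_of_pos hK'0]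
      simp_rw [h1]
      rw [← Finset.sum_div]
      rw [div_le_one hK'0]
      calc ∑ i ∈ Finset.Ico N (n + 1), ‖c n i‖
          ≤ ∑ i ∈ Finset.range (n + 1), ‖c n i‖ := by
            refine Finset.sum_le_sum_of_subset_of_nonneg ?_ (fun i _ _ => norm_nonneg _)
            rw [Finset.range_eq_Ico]
            exact Finset.Ico_subset_Ico (Nat.zero_le N) le_rfl
        _ ≤ K := hrow n
        _ ≤ K' := le_max_left K 1
    have heq : ∑ i ∈ Finset.Ico N (n + 1), c n i • v i
        = (K' : ℂ) • ∑ i ∈ Finset.Ico N (n + 1), (c n i / (K' : ℂ)) • v i := by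
      rw [Finset.smul_sum]
      refine Finset.sum_congr rfl fun i _ => ?_
      rw [← smul_assoc, smul_eq_mul, mul_div_cancel₀ _ hK'ne]
    rw [heq]
    obtain ⟨w, hwW, hwe⟩ := hs_sub hcomb
    rw [← hwe, smul_inv_smul₀ hK'ne]
    exact hwW
  rw [Set.mem_preimage, ← hsplit]
  exact hWu _ hn1 _ htail

end AuxLemmas4
section AuxLemmas5

variable {E : Type*} [AddCommGroup E] [Module ℂ E] [UniformSpace E]
  [IsUniformAddGroup E] [ContinuousSMul ℂ E] [LocallyConvexSpace ℝ E]
  [BarrelledSpace ℂ E]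

lemma equicontinuous_of_tendsto {S : ℕ → E →L[ℂ] E} {f : E → E}
    (h : ∀ x, Tendsto (fun n => S n x) atTop (𝓝 (f x))) :
    Equicontinuous fun n => ⇑(S n) := by
  have : ContinuousSMul ℝ E := IsScalarTower.continuousSMul ℂ
  have : LocallyConvexSpace ℂ E := locallyConvexSpace_complex_of_real
  have hq := with_gaugeSeminormFamily (𝕜 := ℂ) (E := E)
  exact (hq.banach_steinhaus fun k x =>
    (((hq.continuous_seminorm k).tendsto _).comp (h x)).bddAbove_range).equicontinuous

lemma exists_clm_of_tendsto [T2Space E] (S : ℕ → E →L[ℂ] E)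
    (h : ∀ x, ∃ y, Tendsto (fun n => S n x) atTop (𝓝 y)) :
    ∃ P : E →L[ℂ] E, ∀ x, Tendsto (fun n => S n x) atTop (𝓝 (P x)) := by
  have : ContinuousSMul ℝ E := IsScalarTower.continuousSMul ℂ
  have : LocallyConvexSpace ℂ E := locallyConvexSpace_complex_of_real
  have hq := with_gaugeSeminormFamily (𝕜 := ℂ) (E := E)
  choose f hf using h
  have hten : Tendsto (fun n x => S n x) atTop (𝓝 f) := tendsto_pi_nhds.mpr hf
  exact ⟨hq.continuousLinearMapOfTendsto S hten, hf⟩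

end AuxLemmas5

section AuxLemmas6

variable (E : Type*) [AddCommGroup E] [Module ℂ E] [UniformSpace E]
  [IsUniformAddGroup E] [ContinuousSMul ℂ E] [LocallyConvexSpace ℝ E] [T2Space E]

lemma t2_weakSpace : T2Space (WeakSpace ℂ E) := by
  rw [IsTopologicalAddGroup.t2Space_iff_zero_closed]
  have h1 : (toWeakSpace ℂ E) '' (closure {0}) = closure ((toWeakSpace ℂ E) '' {0}) :=
    (convex_singleton (0 : E)).toWeakSpace_closure ℂ
  simp only [closure_singleton, Set.image_singleton, map_zero] at h1
  exact closure_eq_iff_isClosed.mp h1.symm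

end AuxLemmas6
/-- On a barrelled space, for a probability matrix `A` with `a_{n0} → 0`:
(i) [`T` `A`-bounded, `AΔ`-null, with weakly relatively compact orbits] implies
(ii) [`T` `A`-ergodic], which implies (iii) [`T` `A`-bounded and `ΔA`-null]; and if the
pair `(ΔA, AΔ)` satisfies (*2C) then (i) and (ii) are equivalent. -/
theorem statement11 {E : Type*} [AddCommGroup E] [Module ℂ E] [UniformSpace E]
    [IsUniformAddGroup E] [ContinuousSMul ℂ E] [LocallyConvexSpace ℝ E] [T2Space E]
    [BarrelledSpace ℂ E]
    (A : Mat) (hA : A.IsProb) (h0 : Tendsto (fun n => A n 0) atTop (𝓝 (0 : ℂ)))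
    (T : E →L[ℂ] E) :
    ((OpBounded A T ∧ OpNull (Mat.mul A Mat.delta) T ∧
        ∀ x : E, IsCompact (closure
          (Set.range fun n : ℕ => toWeakSpace ℂ E (matOpPow A T n x)))) →
      OpErgodic A T) ∧
    (OpErgodic A T → OpBounded A T ∧ OpNull (Mat.mul Mat.delta A) T) ∧
    (PairStar2C (Mat.mul Mat.delta A) (Mat.mul A Mat.delta) →
      ((OpBounded A T ∧ OpNull (Mat.mul A Mat.delta) T ∧
        ∀ x : E, IsCompact (closure
          (Set.range fun n : ℕ => toWeakSpace ℂ E (matOpPow A T n x)))) ↔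
        OpErgodic A T)) := by
  obtain ⟨hAlt, hApos, hAsum⟩ := hA
  have hT2w : T2Space (WeakSpace ℂ E) := t2_weakSpace E
  have hCSR : ContinuousSMul ℝ E := IsScalarTower.continuousSMul ℂ
  -- (i) → (ii)
  have h12 : (OpBounded A T ∧ OpNull (Mat.mul A Mat.delta) T ∧
      ∀ x : E, IsCompact (closure
        (Set.range fun n : ℕ => toWeakSpace ℂ E (matOpPow A T n x)))) →
      OpErgodic A T := by
    rintro ⟨hb, hnull, hcpt⟩
    set S : ℕ → E →L[ℂ] E := fun n => matOpPow A T n with hS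
    have hbS : Equicontinuous fun n => ⇑(S n) := hb
    -- Step A : (AT)_n (x - Tx) → 0
    have hnullA : ∀ x : E, Tendsto (fun n => S n x - S n (T x)) atTop (𝓝 0) := by
      intro x
      have h1 : Tendsto (fun n => A n 0 • (x - T x)) atTop (𝓝 (0 : E)) := by
        simpa using h0.smul_const (x - T x)
      have h2 : Tendsto (fun n => A n 0 • x - matOpPow (Mat.mul A Mat.delta) T n x)
          atTop (𝓝 (0 : E)) := by
        have := (h0.smul_const x).sub (hnull x)
        simpa [matOpPow] using this
      have h3 : Tendsto (fun n => T (A n 0 • x - matOpPow (Mat.mul A Mat.delta) T n x))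
          atTop (𝓝 (0 : E)) := by
        have h3' := (T.continuous.tendsto 0).comp h2
        rw [map_zero] at h3'
        exact h3'
      have h4 := h1.add h3
      rw [add_zero] at h4
      have heq : (fun n => S n x - S n (T x)) = fun n => A n 0 • (x - T x)
          + T (A n 0 • x - matOpPow (Mat.mul A Mat.delta) T n x) :=
        funext fun n => matOpPow_mul_delta_apply A hAlt T n x
      rw [heq]
      exact h4
    -- Step B : (AT)_n (x - T^i x) → 0
    have hnullPow : ∀ (i : ℕ) (x : E),
        Tendsto (fun n => S n x - S n ((T ^ i) x)) atTop (𝓝 0) := by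
      intro i
      induction i with
      | zero =>
        intro x
        simp only [pow_zero, ContinuousLinearMap.one_apply, sub_self]
        exact tendsto_const_nhds
      | succ i ih =>
        intro x
        have h1 := ih x
        have h2 := hnullA ((T ^ i) x)
        have h3 := h1.add h2
        rw [add_zero] at h3
        have heq : (fun n => S n x - S n ((T ^ (i + 1)) x))
            = fun n => (S n x - S n ((T ^ i) x))
              + (S n ((T ^ i) x) - S n (T ((T ^ i) x))) := by
          funext n
          rw [pow_succ', ContinuousLinearMap.mul_apply]
          abel
        rw [heq]
        exact h3
    -- Step C : (AT)_n (x - (AT)_m x) → 0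
    have hnullS : ∀ (m : ℕ) (x : E),
        Tendsto (fun n => S n x - S n (S m x)) atTop (𝓝 0) := by
      intro m x
      have heq : ∀ n, S n x - S n (S m x)
          = ∑ i ∈ Finset.range (m + 1), A m i • (S n x - S n ((T ^ i) x)) := by
        intro n
        have e1 : ∑ i ∈ Finset.range (m + 1), A m i • (S n x - S n ((T ^ i) x))
            = (∑ i ∈ Finset.range (m + 1), A m i) • S n x
              - S n (∑ i ∈ Finset.range (m + 1), A m i • (T ^ i) x) := by
          rw [map_sum, Finset.sum_smul]
          simp_rw [smul_sub, map_smul]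
          rw [Finset.sum_sub_distrib]
        rw [e1, hAsum m, one_smul, ← matOpPow_apply]
      rw [funext heq]
      have := tendsto_finset_sum (Finset.range (m + 1))
        (fun i (_ : i ∈ Finset.range (m + 1)) => (hnullPow i x).const_smul (A m i))
      simpa using this
    -- pointwise limits exist
    have key : ∀ x : E, ∃ y : E, Tendsto (fun n => S n x) atTop (𝓝 y) := by
      intro x
      set g : ℕ → WeakSpace ℂ E := fun n => toWeakSpace ℂ E (S n x) with hg
      have hfle : Filter.map g atTop ≤ 𝓟 (closure (Set.range g)) :=
        le_principal_iff.mpr (mem_map.mpr (Filter.Eventually.of_forall fun n =>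
          subset_closure (Set.mem_range_self n)))
      obtain ⟨y, hyK, hy⟩ := (hcpt x).exists_clusterPt hfle
      obtain ⟨U, hUle, hUy⟩ := mapClusterPt_iff_ultrafilter.mp hy
      set y' : E := (toWeakSpace ℂ E).symm y with hy'
      have hyy' : toWeakSpace ℂ E y' = y := (toWeakSpace ℂ E).apply_symm_apply y
      -- fixed points
      have hfix : ∀ m, S m y' = y' := by
        intro m
        have hWm : Tendsto (fun n => (WeakSpace.map (S m)) (g n)) (↑U)
            (𝓝 (WeakSpace.map (S m) y)) :=
          ((WeakSpace.map (S m)).continuous.tendsto y).comp hUy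
        have h1 : Tendsto (fun n => S m (S n x) - S n x) atTop (𝓝 0) := by
          have heq : (fun n => S m (S n x) - S n x)
              = fun n => -(S n x - S n (S m x)) := by
            funext n
            rw [matOpPow_comm]
            abel
          rw [heq]
          simpa using (hnullS m x).neg
        have h3 : Tendsto (fun n => toWeakSpaceCLM ℂ E (S m (S n x) - S n x)) atTop
            (𝓝 0) := by
          have := ((toWeakSpaceCLM ℂ E).continuous.tendsto 0).comp h1
          simpa [Function.comp_def] using this
        have h4 : Tendsto (fun n => toWeakSpace ℂ E (S m (S n x))) (↑U) (𝓝 y) := by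
          have h5 := (h3.mono_left hUle).add hUy
          rw [zero_add] at h5
          have heq : (fun n => toWeakSpaceCLM ℂ E (S m (S n x) - S n x) + g n)
              = fun n => toWeakSpace ℂ E (S m (S n x)) := by
            funext n
            rw [map_sub]
            simp only [toWeakSpaceCLM_eq_toWeakSpace, hg]
            abel
          rwa [heq] at h5
        have h6 : Tendsto (fun n => toWeakSpace ℂ E (S m (S n x))) (↑U)
            (𝓝 (toWeakSpace ℂ E (S m y'))) := by
          have heq : (fun n => (WeakSpace.map (S m)) (g n))
              = fun n => toWeakSpace ℂ E (S m (S n x)) := rfl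
          have heq2 : WeakSpace.map (S m) y = toWeakSpace ℂ E (S m y') := by
            rw [← hyy']; rfl
          rw [heq, heq2] at hWm
          exact hWm
        have h7 : toWeakSpace ℂ E (S m y') = y := tendsto_nhds_unique h6 h4
        apply (toWeakSpace ℂ E).injective
        rw [h7, hyy']
      -- the convergence set
      set D : Set E := {z : E | Tendsto (fun n => S n z) atTop (𝓝 0)} with hD
      have hDclosed : IsClosed D := isClosed_tendsto_zero hbS
      have hDconvex : Convex ℝ D := by
        intro u hu v hv a b ha hb' hab
        simp only [hD, Set.mem_setOf_eq] at hu hv ⊢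
        have heq : (fun n => S n (a • u + b • v)) = fun n => a • S n u + b • S n v := by
          funext n
          rw [map_add, (S n).map_smul_of_tower, (S n).map_smul_of_tower]
        rw [heq]
        have := (hu.const_smul a).add (hv.const_smul b)
        simpa using this
      have hzmD : ∀ m : ℕ, x - S m x ∈ D := by
        intro m
        simp only [hD, Set.mem_setOf_eq]
        have heq : (fun n => S n (x - S m x)) = fun n => S n x - S n (S m x) :=
          funext fun n => map_sub _ _ _
        rw [heq]
        exact hnullS m x
      have hzw : Tendsto (fun m => toWeakSpace ℂ E (x - S m x)) (↑U)
          (𝓝 (toWeakSpace ℂ E (x - y'))) := by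
        have h8 : Tendsto (fun m => toWeakSpace ℂ E x - g m) (↑U)
            (𝓝 (toWeakSpace ℂ E x - y)) := tendsto_const_nhds.sub hUy
        have heq : (fun m => toWeakSpace ℂ E x - g m)
            = fun m => toWeakSpace ℂ E (x - S m x) := by
          funext m
          rw [map_sub]
        have heq2 : toWeakSpace ℂ E x - y = toWeakSpace ℂ E (x - y') := by
          rw [map_sub, hyy']
        rwa [heq, heq2] at h8
      have hclos : toWeakSpace ℂ E (x - y') ∈ closure ((toWeakSpace ℂ E) '' D) :=
        mem_closure_of_tendsto hzw (Filter.Eventually.of_forall fun m =>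
          Set.mem_image_of_mem _ (hzmD m))
      have hz : x - y' ∈ D := by
        rw [← hDconvex.toWeakSpace_closure ℂ] at hclos
        obtain ⟨w, hwD, hwe⟩ := hclos
        have : w = x - y' := (toWeakSpace ℂ E).injective hwe
        rw [← this, ← hDclosed.closure_eq]
        exact hwD
      refine ⟨y', ?_⟩
      have heq : (fun n => S n x) = fun n => S n (x - y') + y' := by
        funext n
        rw [map_sub, hfix n]
        abel
      rw [heq]
      have := hz.add (tendsto_const_nhds (x := y'))
      simpa using this
    obtain ⟨P, hP⟩ := exists_clm_of_tendsto S key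
    exact ⟨P, hP⟩
  -- (ii) → (iii)
  have h23 : OpErgodic A T → OpBounded A T ∧ OpNull (Mat.mul Mat.delta A) T := by
    rintro ⟨P, hP⟩
    constructor
    · exact equicontinuous_of_tendsto hP
    · intro x
      rw [← tendsto_add_atTop_iff_nat 1]
      have heq : (fun n => matOp (Mat.mul Mat.delta A) (fun i => T ^ i) (n + 1) x)
          = fun n => matOpPow A T (n + 1) x - matOpPow A T n x :=
        funext fun n => matOpPow_delta_mul_apply A hAlt T n x
      rw [heq]
      have := ((hP x).comp (tendsto_add_atTop_nat 1)).sub (hP x)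
      simpa [matOpPow] using this
  refine ⟨h12, h23, fun hstar => ⟨h12, fun hE => ?_⟩⟩
  obtain ⟨C, hClt, hCeq, ⟨⟨K, hK⟩, hCcol⟩⟩ := hstar
  obtain ⟨P, hP⟩ := hE
  obtain ⟨hbd, hnullDA⟩ := h23 ⟨P, hP⟩
  refine ⟨hbd, ?_, ?_⟩
  · -- AΔ-null via Toeplitz
    intro x
    have hDAlt : (Mat.mul Mat.delta A).LowerTri := lowerTri_mul delta_lowerTri hAlt
    have hveq : (fun n => matOp (Mat.mul A Mat.delta) (fun i => T ^ i) n x)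
        = fun n => ∑ j ∈ Finset.range (n + 1), C n j
            • matOpPow (Mat.mul Mat.delta A) T j x := by
      funext n
      rw [show Mat.mul A Mat.delta = Mat.mul C (Mat.mul Mat.delta A) from hCeq.symm]
      exact matOpPow_mul_apply' hClt hDAlt T n x
    rw [hveq]
    exact toeplitz_tendsto_zero hK hCcol _ (hnullDA x)
  · -- weak compactness of orbits
    intro x
    have hgw : Tendsto (fun n => toWeakSpace ℂ E (matOpPow A T n x)) atTop
        (𝓝 (toWeakSpace ℂ E (P x))) :=
      ((toWeakSpaceCLM ℂ E).continuous.tendsto _).comp (hP x)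
    have hc := hgw.isCompact_insert_range
    exact hc.of_isClosed_subset isClosed_closure
      (closure_minimal (Set.subset_insert _ _) hc.isClosed)
end
end
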